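/- Let w be a word over Σ with ι(w) = k ≥ 1 and σ = |Σ|. If ι(w^s) − ι(w^{s−1}) = k for all s ∈ {1, …, σ}, then ι(w^s) = s·k for all s ∈ ℕ. -/

import Mathlib

open List

variable {α : Type*}

/-- `w` is `k`-universal: every word of length `k` over the alphabet `α`
is a scattered factor (subsequence) of `w`. -/
def IsUniversal [Fintype α] (k : ℕ) (w : List α) : Prop :=
  ∀ u : List α, u.length = k → u.Sublist w

/-- The universality index `ι(w)`: the largest `k` such that `w` is `k`-universal. -/
noncomputable def univIndex [Fintype α] (w : List α) : ℕ :=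
  sSup {k | IsUniversal k w}

/-- The circular universality index `ζ(w)`: the largest `k` such that some
conjugate of `w` is `k`-universal. -/
noncomputable def circIndex [Fintype α] (w : List α) : ℕ :=
  sSup {k | ∃ u v : List α, w = u ++ v ∧ IsUniversal k (v ++ u)}

/-- `wpow w s = w^s`, the `s`-fold concatenation of `w`. -/
def wpow (w : List α) (s : ℕ) : List α := (List.replicate s w).flatten

/-- Auxiliary (fuelled) computation of the remainder of the arch factorisation:
greedily remove the shortest prefix containing every letter of the alphabet. -/
def remAux [Fintype α] [DecidableEq α] : ℕ → List α → List α
  | 0, w => w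
  | (n+1), w =>
    match (List.range' 1 w.length).find?
        (fun m => decide ((w.take m).toFinset = Finset.univ)) with
    | none => w
    | some m => remAux n (w.drop m)

/-- `rem w = r(w)`, the remainder of the arch factorisation of `w`. -/
def rem [Fintype α] [DecidableEq α] (w : List α) : List α := remAux w.length w

/-- Auxiliary (fuelled) computation of the list of arches of `w`. -/
def archesAux [Fintype α] [DecidableEq α] : ℕ → List α → List (List α)
  | 0, _ => []
  | (n+1), w =>
    match (List.range' 1 w.length).find?
        (fun m => decide ((w.take m).toFinset = Finset.univ)) with
    | none => []
    | some m => (w.take m) :: archesAux n (w.drop m)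

/-- `arches w`: the list `[arch₁(w), …, arch_{ι(w)}(w)]` of arches of `w`. -/
def arches [Fintype α] [DecidableEq α] (w : List α) : List (List α) :=
  archesAux w.length w

/-!
Factor words greedily into arches (shortest prefixes containing every letter) and a rest missing
some letter. Then `ι(w^s)` counts the arches produced when the rests `r₀ = ε, r₁, r₂, …` are
extended by one copy of `w` at a time, `r_{s+1}` being the rest of `r_s w`. As long as each step
yields `k` arches, each rest is a suffix of the next, `r_{s+1} = z r_s`. Every rest misses a letter,
so within the first `σ` steps the alphabet of the rest stops growing: `alph z ⊆ alph r_j` for some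
`j < σ`. Prepending such a `z` to `r_j w` changes neither the arch count nor the rest, so `r_{j+1}`
reproduces itself with `k` arches from then on.
-/

theorem List.sublist_of_cons_sublist_append_cons {c : α} {b u x : List α} (hc : c ∉ b)
    (h : c :: u <+ b ++ c :: x) : u <+ x := by
  obtain ⟨l₁, l₂, he, h₁, h₂⟩ := sublist_append_iff.mp h
  cases l₁ with
  | nil =>
    rw [nil_append] at he
    exact cons_sublist_cons.mp (he ▸ h₂)
  | cons d l =>
    rw [cons_append, cons.injEq] at he
    obtain ⟨rfl, -⟩ := he
    exact absurd (h₁.subset mem_cons_self) hc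

theorem IsUniversal.of_le [Fintype α] {x : List α} {m n : ℕ} (h : IsUniversal n x)
    (hmn : m ≤ n) : IsUniversal m x := by
  rintro (_ | ⟨c, t⟩) hu
  · exact nil_sublist x
  · exact (sublist_append_left _ (replicate (n - m) c)).trans
      (h _ (by rw [length_append, length_replicate]; omega))

theorem univIndex_of_isEmpty [Fintype α] [IsEmpty α] (w : List α) : univIndex w = 0 := by
  have huniv : {k | IsUniversal k w} = Set.univ := by
    refine Set.eq_univ_of_forall fun k => ?_
    rintro (_ | ⟨c, _⟩) _
    · exact nil_sublist w
    · exact isEmptyElim c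
  rw [univIndex, huniv]
  exact Nat.sSup_of_not_bddAbove not_bddAbove_univ

theorem wpow_succ (w : List α) (s : ℕ) : wpow w (s + 1) = wpow w s ++ w := by
  simp [wpow, replicate_succ']

def IsArch (a : List α) : Prop :=
  (∀ c, c ∈ a) ∧ ∃ b c, a = b ++ [c] ∧ c ∉ b

theorem IsArch.prefix_of_complete {a p x : List α} (ha : IsArch a) (hp : p <+: a ++ x)
    (hpc : ∀ c, c ∈ p) : a <+: p := by
  obtain ⟨-, b, c, rfl, hc⟩ := ha
  rcases prefix_or_prefix_of_prefix (prefix_append _ x) hp with h | h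
  · exact h
  · rcases prefix_concat_iff.mp h with rfl | h
    · exact prefix_refl _
    · exact absurd (h.subset (hpc c)) hc

theorem IsArch.eq_of_append_eq {a a' x x' : List α} (ha : IsArch a) (ha' : IsArch a')
    (h : a ++ x = a' ++ x') : a = a' ∧ x = x' := by
  have h₁ : a <+: a' := ha.prefix_of_complete (h ▸ prefix_append a' x') ha'.1
  have h₂ : a' <+: a := ha'.prefix_of_complete (h.symm ▸ prefix_append a x) ha.1
  obtain rfl : a = a' := h₁.eq_of_length (le_antisymm h₁.length_le h₂.length_le)
  exact ⟨rfl, append_cancel_left h⟩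

/-- `x = a₁ ⋯ aₘ r` with arches `aᵢ` and a rest `r` missing some letter. As the last letter of an
arch is new, each `aᵢ` is the shortest prefix of `aᵢ ⋯ aₘ r` containing every letter
(`IsArch.prefix_of_complete`): this is the greedy arch factorisation. -/
inductive ArchFactorization : List α → ℕ → List α → Prop
  | rest {r : List α} : (∃ c, c ∉ r) → ArchFactorization r 0 r
  | arch {a x : List α} {m : ℕ} {r : List α} :
      IsArch a → ArchFactorization x m r → ArchFactorization (a ++ x) (m + 1) r

namespace ArchFactorization

variable {x y z r r' : List α} {m m' : ℕ}

theorem rest_incomplete (h : ArchFactorization x m r) : ∃ c, c ∉ r := by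
  induction h with
  | rest hr => exact hr
  | arch _ _ ih => exact ih

theorem append (h : ArchFactorization x m r) (h' : ArchFactorization (r ++ y) m' r') :
    ArchFactorization (x ++ y) (m + m') r' := by
  induction h with
  | rest _ => simpa using h'
  | arch ha _ ih =>
    rw [append_assoc, Nat.add_right_comm]
    exact arch ha (ih h')

theorem exists_of_nonempty [Nonempty α] (x : List α) : ∃ m r, ArchFactorization x m r := by
  induction x using List.reverseRecOn with
  | nil => exact ⟨0, [], rest ⟨Classical.arbitrary α, not_mem_nil⟩⟩
  | append_singleton x c ih =>
    obtain ⟨m, r, h⟩ := ih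
    by_cases hc : ∀ d, d ∈ r ++ [c]
    · have hcr : c ∉ r := by
        obtain ⟨d, hd⟩ := h.rest_incomplete
        obtain rfl : d = c := by simpa [hd] using hc d
        exact hd
      have hr : ArchFactorization (r ++ [c] ++ []) 1 [] :=
        arch ⟨hc, r, c, rfl, hcr⟩ (rest ⟨Classical.arbitrary α, not_mem_nil⟩)
      exact ⟨m + 1, [], h.append (by simpa using hr)⟩
    · push Not at hc
      exact ⟨m, r ++ [c], h.append (rest hc)⟩

theorem isUniversal [Fintype α] (h : ArchFactorization x m r) : IsUniversal m x := by
  induction h with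
  | rest _ =>
    intro u hu
    rw [length_eq_zero_iff.mp hu]
    exact nil_sublist _
  | arch ha _ ih =>
    rintro (_ | ⟨c, u⟩) hu
    · exact nil_sublist _
    · exact (singleton_sublist.mpr (ha.1 c)).append (ih u (by simpa using hu))

theorem not_isUniversal [Fintype α] (h : ArchFactorization x m r) : ¬ IsUniversal (m + 1) x := by
  suffices ∃ u : List α, u.length = m + 1 ∧ ¬ u <+ x from
    fun hx => by obtain ⟨u, hu, hux⟩ := this; exact hux (hx u hu)
  induction h with
  | rest hr =>
    obtain ⟨c, hc⟩ := hr
    exact ⟨[c], rfl, fun hcr => hc (singleton_sublist.mp hcr)⟩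
  | arch ha _ ih =>
    obtain ⟨u, hu, hux⟩ := ih
    obtain ⟨-, b, c, rfl, hc⟩ := ha
    refine ⟨c :: u, by simp [hu], fun hcu => hux ?_⟩
    exact sublist_of_cons_sublist_append_cons hc (by simpa using hcu)

theorem univIndex_eq [Fintype α] (h : ArchFactorization x m r) : univIndex x = m := by
  refine IsGreatest.csSup_eq ⟨h.isUniversal, fun j hj => ?_⟩
  by_contra hmj
  exact h.not_isUniversal (IsUniversal.of_le (m := m + 1) hj (by omega))

theorem unique (h : ArchFactorization x m r) (h' : ArchFactorization x m' r') :
    m = m' ∧ r = r' := by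
  induction h generalizing m' r' with
  | rest hr =>
    cases h' with
    | rest _ => exact ⟨rfl, rfl⟩
    | arch ha _ =>
      obtain ⟨c, hc⟩ := hr
      exact absurd (mem_append_left _ (ha.1 c)) hc
  | @arch a x _ _ ha _ ih =>
    generalize hx : a ++ x = x' at h'
    cases h' with
    | rest hr =>
      obtain ⟨c, hc⟩ := hr
      exact absurd (hx ▸ mem_append_left _ (ha.1 c)) hc
    | arch ha' h' =>
      obtain ⟨rfl, rfl⟩ := ha.eq_of_append_eq ha' hx
      obtain ⟨rfl, rfl⟩ := ih h'
      exact ⟨rfl, rfl⟩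

theorem of_append [Nonempty α] (h : ArchFactorization x m r)
    (h' : ArchFactorization (x ++ y) m' r') : ArchFactorization (r ++ y) (m' - m) r' := by
  obtain ⟨d, r'', hd⟩ := exists_of_nonempty (r ++ y)
  obtain ⟨rfl, rfl⟩ := (h.append hd).unique h'
  simpa using hd

theorem mono (h : ArchFactorization x m r) (h' : ArchFactorization (z ++ x) m' r') :
    m ≤ m' ∧ (m = m' → r <:+ r') := by
  induction h generalizing z m' r' with
  | @rest r _ =>
    refine ⟨Nat.zero_le _, ?_⟩
    rintro rfl
    generalize hx : z ++ r = x' at h'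
    cases h'
    exact hx ▸ suffix_append z r
  | @arch a x _ _ ha _ ih =>
    generalize hx : z ++ (a ++ x) = x' at h'
    cases h' with
    | rest hr =>
      obtain ⟨c, hc⟩ := hr
      exact absurd (hx ▸ mem_append_right _ (mem_append_left _ (ha.1 c))) hc
    | @arch a₂ x₂ _ _ ha₂ h₂ =>
      obtain ⟨t, ht⟩ : a₂ <+: z ++ a :=
        ha₂.prefix_of_complete ⟨x, by rw [append_assoc, hx]⟩
          fun c => mem_append_right _ (ha.1 c)
      obtain rfl : x₂ = t ++ x := by
        rw [← append_assoc, ← ht, append_assoc] at hx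
        exact (append_cancel_left hx).symm
      obtain ⟨hle, hsuffix⟩ := ih h₂
      exact ⟨by omega, fun he => hsuffix (by omega)⟩

/-- The first arch of `r ++ y` extends past `r`, so its new last letter stays new after
prepending letters of `r`. -/
theorem prepend (h : ArchFactorization (r ++ y) m r') (hm : 0 < m) (hz : z ⊆ r)
    (hr : ∃ c, c ∉ r) : ArchFactorization (z ++ (r ++ y)) m r' := by
  generalize hx : r ++ y = x' at h
  cases h with
  | rest _ => omega
  | @arch a x _ _ ha h =>
    obtain ⟨ha_complete, b, c, rfl, hcb⟩ := ha
    obtain ⟨d, hd⟩ := hr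
    have hrb : r <+: b := by
      rcases prefix_or_prefix_of_prefix (prefix_append _ x) (hx ▸ prefix_append r y) with h | h
      · exact absurd (h.subset (ha_complete d)) hd
      · rcases prefix_concat_iff.mp h with rfl | h
        · exact absurd (ha_complete d) hd
        · exact h
    have hzb : c ∉ z ++ b := fun hc =>
      (mem_append.mp hc).elim (fun hcz => hcb (hrb.subset (hz hcz))) hcb
    rw [← append_assoc]
    exact arch ⟨fun d => mem_append_right _ (ha_complete d), z ++ b, c, by simp, hzb⟩ h

theorem rest_suffix_of_suffix {w r'' : List α} (h : ArchFactorization (r ++ w) m r')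
    (h' : ArchFactorization (r' ++ w) m r'') (hr : r <:+ r') : r' <:+ r'' := by
  obtain ⟨z, rfl⟩ := hr
  rw [append_assoc] at h'
  exact (h.mono h').2 rfl

theorem count_eq_of_rest_eq {w s : List α} {r : ℕ → List α} {d : ℕ → ℕ} {j i : ℕ}
    (hfix : ArchFactorization (s ++ w) m s)
    (hr : ∀ i, ArchFactorization (r i ++ w) (d i) (r (i + 1))) (hj : r j = s) (hi : j ≤ i) :
    d i = m := by
  have hrest : r i = s := by
    induction i, hi using Nat.le_induction with
    | base => exact hj
    | succ i _ ih =>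
      have h := hr i
      rw [ih] at h
      exact (hfix.unique h).2.symm
  have h := hr i
  rw [hrest] at h
  exact (hfix.unique h).1.symm

end ArchFactorization

theorem exists_lt_card_succ_subset [Fintype α] {r : ℕ → List α}
    (hr : ∀ i < Fintype.card α, r i ⊆ r (i + 1)) (hcard : ∃ c, c ∉ r (Fintype.card α)) :
    ∃ i < Fintype.card α, r (i + 1) ⊆ r i := by
  classical
  by_contra! hstrict
  have hgrow : ∀ i ≤ Fintype.card α, i ≤ (r i).toFinset.card := by
    intro i
    induction i with
    | zero => exact fun _ => Nat.zero_le _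
    | succ i ih =>
      intro hi
      have hss : (r i).toFinset ⊂ (r (i + 1)).toFinset := by
        refine Finset.ssubset_iff_subset_ne.mpr ⟨fun c => ?_, fun he => hstrict i hi ?_⟩
        · simpa only [mem_toFinset] using @hr i hi c
        · intro c hc
          rwa [← mem_toFinset, he, mem_toFinset]
      exact (ih (by omega)).trans_lt (Finset.card_lt_card hss)
  obtain ⟨c, hc⟩ := hcard
  have huniv := Finset.eq_univ_of_card _ ((Finset.card_le_univ _).antisymm (hgrow _ le_rfl))
  exact hc (mem_toFinset.mp (huniv ▸ Finset.mem_univ c))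

theorem ArchFactorization.count_eq_of_forall_lt_card [Fintype α] {w : List α}
    {r : ℕ → List α} {d : ℕ → ℕ} {k : ℕ} (hk : 0 < k) (hr₀ : r 0 = [])
    (hr : ∀ i, ArchFactorization (r i ++ w) (d i) (r (i + 1)))
    (hd : ∀ i < Fintype.card α, d i = k) (i : ℕ) : d i = k := by
  have hsuffix : ∀ i < Fintype.card α, r i <:+ r (i + 1) := by
    intro i
    induction i with
    | zero => exact fun _ => hr₀ ▸ nil_suffix
    | succ i ih =>
      intro hi
      exact (hd i (by omega) ▸ hr i).rest_suffix_of_suffix (hd (i + 1) hi ▸ hr (i + 1))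
        (ih (by omega))
  have hincomplete : ∀ i, ∃ c, c ∉ r i := by
    rintro (_ | i)
    · obtain ⟨c, -⟩ := (hr 0).rest_incomplete
      exact ⟨c, hr₀ ▸ not_mem_nil⟩
    · exact (hr i).rest_incomplete
  obtain ⟨j, hj, hsub⟩ :=
    exists_lt_card_succ_subset (fun i hi => (hsuffix i hi).subset) (hincomplete _)
  obtain ⟨z, hz⟩ := hsuffix j hj
  have hfix : ArchFactorization (r (j + 1) ++ w) k (r (j + 1)) := by
    have h := (hd j hj ▸ hr j).prepend hk (fun c hc => hsub (hz ▸ mem_append_left _ hc))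
      (hincomplete j)
    rwa [← append_assoc, hz] at h
  by_cases hi : i < Fintype.card α
  · exact hd i hi
  · exact hfix.count_eq_of_rest_eq hr rfl (by omega)

theorem constant_growth_of_initial_constant_growth [Fintype α] (w : List α) (k : ℕ)
    (hk : univIndex w = k) (hk1 : 1 ≤ k)
    (h : ∀ s : ℕ, 1 ≤ s → s ≤ Fintype.card α →
      univIndex (wpow w s) = univIndex (wpow w (s - 1)) + k) :
    ∀ s : ℕ, 1 ≤ s → univIndex (wpow w s) = s * k := by
  rcases isEmpty_or_nonempty α with hα | hα
  · have := univIndex_of_isEmpty w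
    omega
  choose m r hmr using fun s => ArchFactorization.exists_of_nonempty (wpow w s)
  have hm : ∀ s, univIndex (wpow w s) = m s := fun s => (hmr s).univIndex_eq
  have hstep (s : ℕ) : ArchFactorization (r s ++ w) (m (s + 1) - m s) (r (s + 1)) :=
    (hmr s).of_append (wpow_succ w s ▸ hmr (s + 1))
  obtain ⟨hm₀, hr₀⟩ :=
    (ArchFactorization.rest ⟨Classical.arbitrary α, not_mem_nil⟩).unique (hmr 0)
  have hgrowth := ArchFactorization.count_eq_of_forall_lt_card hk1 hr₀.symm hstep
    fun i hi => by have := h (i + 1) (by omega) hi; rw [hm, hm] at this; simp [this]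
  have hlinear (s : ℕ) : m s = s * k := by
    induction s with
    | zero => simp [← hm₀]
    | succ s ih => have := hgrowth s; rw [add_mul, one_mul]; omega
  exact fun s _ => (hm s).trans (hlinear s)
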